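/- arXiv:1307.1537 — 4 statements merged into one kernel-verified Lean document; each statement's English description precedes it below -/
import Mathlib

section
/- Let L ≥ 1, and for j = 1,…,L let β_j > 0 and f_j > 0 be real constants, and let β > 0. Then there exists a unique λ > 0 such that Σ_{j=1}^L β_j · max(0, 1/λ − 1/f_j) = β. -/
/-- Let L ≥ 1, β_j > 0, f_j > 0 and β > 0. Then there exists a
unique λ > 0 such that Σ_j β_j · max(0, 1/λ − 1/f_j) = β. -/
theorem waterLevel_exists_unique (L : ℕ) (hL : 1 ≤ L) (β : ℝ) (hβ : 0 < β)
    (βv f : Fin L → ℝ) (hβv : ∀ j, 0 < βv j) (hf : ∀ j, 0 < f j) :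
    ∃! lam : ℝ, 0 < lam ∧ ∑ j, βv j * max 0 (1 / lam - 1 / f j) = β := by
  set j0 : Fin L := ⟨0, hL⟩
  set h : ℝ → ℝ := fun x => ∑ j, βv j * max 0 (x - 1 / f j) with hh
  have hcont : Continuous h := by
    apply continuous_finset_sum
    intro j _
    exact continuous_const.mul (continuous_const.max (continuous_id.sub continuous_const))
  have key : ∀ x y : ℝ, x < y → h x = β → h x < h y := by
    intro x y hxy hx
    have hex : ∃ j, 0 < x - 1 / f j := by
      by_contra hc
      push_neg at hc
      have hz : h x = 0 := Finset.sum_eq_zero (fun j _ => by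
        rw [max_eq_left (hc j)]; ring)
      rw [hx] at hz; linarith
    obtain ⟨j, hj⟩ := hex
    apply Finset.sum_lt_sum
    · intro i _
      exact mul_le_mul_of_nonneg_left (max_le_max le_rfl (by linarith)) (hβv i).le
    · refine ⟨j, Finset.mem_univ j, ?_⟩
      apply mul_lt_mul_of_pos_left _ (hβv j)
      rw [max_eq_right hj.le, max_eq_right (by linarith)]
      linarith
  set M : ℝ := 1 / f j0 + β / βv j0 with hM
  have hMpos : 0 < M := by
    have h1 := one_div_pos.mpr (hf j0)
    have h2 := div_pos hβ (hβv j0)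
    rw [hM]; linarith
  have hM1 : βv j0 * max 0 (M - 1 / f j0) = β := by
    rw [show M - 1 / f j0 = β / βv j0 by rw [hM]; ring,
      max_eq_right (div_pos hβ (hβv j0)).le, mul_comm, div_mul_cancel₀ _ (hβv j0).ne']
  have hMle : β ≤ h M := by
    calc β = βv j0 * max 0 (M - 1 / f j0) := hM1.symm
      _ ≤ h M := Finset.single_le_sum
          (f := fun j => βv j * max 0 (M - 1 / f j))
          (fun i _ => mul_nonneg (hβv i).le (le_max_left _ _)) (Finset.mem_univ j0)
  have h0 : h 0 = 0 := Finset.sum_eq_zero fun j _ => by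
    rw [max_eq_left (by have := one_div_pos.mpr (hf j); linarith)]; ring
  obtain ⟨x, hxmem, hx⟩ := intermediate_value_Icc hMpos.le hcont.continuousOn
    (Set.mem_Icc.mpr ⟨by rw [h0]; exact hβ.le, hMle⟩)
  have hxpos : 0 < x := by
    rcases eq_or_lt_of_le hxmem.1 with he | hl
    · exfalso; rw [← he, h0] at hx; linarith
    · exact hl
  refine ⟨1 / x, ⟨by positivity, ?_⟩, ?_⟩
  · rw [one_div_one_div]; exact hx
  · rintro lam ⟨hlam, heq⟩
    have hy : h (1 / lam) = β := heq
    have hxy : 1 / lam = x := by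
      rcases lt_trichotomy (1 / lam) x with hlt | he | hgt
      · have := key _ _ hlt hy; rw [hy, hx] at this; linarith
      · exact he
      · have := key _ _ hgt hx; rw [hy, hx] at this; linarith
    rw [← hxy, one_div_one_div]
end

section
/- Fix β > 0 and γ > 0, and for ρ > 0 write g := g(β,ρ) and F(ρ) := f(γ,β,ρ). Then F is differentiable at every ρ > 0, with derivative F'(ρ) = F(ρ)² · (2·(1/g + 1) / (1 + (ρ/β)·(1+g)²)²) · (ρ/β − 1/γ) · g'(ρ), where g'(ρ) = −g·(1+g)²/(β + ρ·(1+g)²). -/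
/-!
The closed form of `g` is the positive root of `ρ g² + (ρ + β - 1) g = 1`, whose discriminant
has square root `2ρg + ρ + β - 1`. Differentiating the closed form and using the quadratic
relation gives the ODE `g' (β + ρ(1+g)²) = -g(1+g)²`. In the quotient rule for
`f = g (γ + (γρ/β)(1+g)²) / (γ + (1+g)²)`, every term not carrying the factor `γρ/β - 1`
cancels by this ODE alone, leaving `f' = 2γg(1+g)(γρ/β - 1) g' / (γ + (1+g)²)²`; since
`f / (1 + (ρ/β)(1+g)²) = γg / (γ + (1+g)²)`, this is the stated formula.
-/

/-- The deterministic equivalent `g(β,ρ)`: the unique positive solution of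
`g·(ρ + β/(1+g)) = 1`, given in closed form. -/
noncomputable def gfun (β ρ : ℝ) : ℝ :=
  ((1 - ρ - β) + Real.sqrt ((ρ + β - 1) ^ 2 + 4 * ρ)) / (2 * ρ)

/-- The limiting SINR coefficient `f(γ,β,ρ)` at effective SNR γ. -/
noncomputable def ffun (γ β ρ : ℝ) : ℝ :=
  gfun β ρ * (γ + (γ * ρ / β) * (1 + gfun β ρ) ^ 2) / (γ + (1 + gfun β ρ) ^ 2)

lemma sqrt_discr_eq_gfun (β : ℝ) {ρ : ℝ} (hρ : ρ ≠ 0) :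
    √((ρ + β - 1) ^ 2 + 4 * ρ) = 2 * ρ * gfun β ρ + ρ + β - 1 := by
  unfold gfun
  field_simp
  ring

lemma gfun_quadratic_eq (β : ℝ) {ρ : ℝ} (hρ : 0 < ρ) :
    ρ * gfun β ρ ^ 2 + (ρ + β - 1) * gfun β ρ = 1 := by
  have hsq := Real.sq_sqrt (by positivity : 0 ≤ (ρ + β - 1) ^ 2 + 4 * ρ)
  rw [sqrt_discr_eq_gfun β hρ.ne'] at hsq
  have : 4 * ρ * (ρ * gfun β ρ ^ 2 + (ρ + β - 1) * gfun β ρ) = 4 * ρ * 1 := by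
    linear_combination hsq
  exact mul_left_cancel₀ (by positivity) this

lemma gfun_pos (β : ℝ) {ρ : ℝ} (hρ : 0 < ρ) : 0 < gfun β ρ := by
  have hlt : |ρ + β - 1| < √((ρ + β - 1) ^ 2 + 4 * ρ) := by
    rw [← Real.sqrt_sq_eq_abs]
    exact Real.sqrt_lt_sqrt (sq_nonneg _) (by linarith)
  have : 0 < (1 - ρ - β) + √((ρ + β - 1) ^ 2 + 4 * ρ) := by
    linarith [le_abs_self (ρ + β - 1)]
  unfold gfun
  positivity

lemma gfun_hasDerivAt (β : ℝ) {ρ : ℝ} (hρ : 0 < ρ) :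
    HasDerivAt (gfun β)
      (-(gfun β ρ * (1 + gfun β ρ) ^ 2) / (β + ρ * (1 + gfun β ρ) ^ 2)) ρ := by
  have hD : HasDerivAt (fun r => (r + β - 1) ^ 2 + 4 * r) (2 * (ρ + β - 1) + 4) ρ := by
    refine ((((hasDerivAt_id' ρ).add_const β).sub_const 1).fun_pow 2).fun_add
      ((hasDerivAt_id' ρ).const_mul 4) |>.congr_deriv ?_
    norm_num
  have hnum : HasDerivAt (fun r => (1 - r - β) + √((r + β - 1) ^ 2 + 4 * r))
      (-1 + (2 * (ρ + β - 1) + 4) / (2 * √((ρ + β - 1) ^ 2 + 4 * ρ))) ρ :=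
    (((hasDerivAt_id' ρ).const_sub 1).sub_const β).add (hD.sqrt (by positivity))
  refine (hnum.div ((hasDerivAt_id' ρ).const_mul 2) (by simp [hρ.ne'])).congr_deriv ?_
  have hq := gfun_quadratic_eq β hρ
  have hsg := sqrt_discr_eq_gfun β hρ.ne'
  set s := √((ρ + β - 1) ^ 2 + 4 * ρ)
  have hs : 0 < s := by positivity
  have hden : β + ρ * (1 + gfun β ρ) ^ 2 = (1 + gfun β ρ) * s := by
    linear_combination -hq - (1 + gfun β ρ) * hsg
  rw [hden]
  field_simp
  linear_combination
    (-2 * (s + (2 * ρ * gfun β ρ + ρ + β - 1)) + 2 * β - 2) * hsg - 4 * ρ * hq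

lemma hasDerivAt_sinr_of_ode {G : ℝ → ℝ} {G' β γ ρ : ℝ} (hG : HasDerivAt G G' ρ)
    (hode : G' * (β + ρ * (1 + G ρ) ^ 2) = -(G ρ * (1 + G ρ) ^ 2))
    (hβ : β ≠ 0) (hγu : γ + (1 + G ρ) ^ 2 ≠ 0) :
    HasDerivAt (fun r => G r * (γ + γ * r / β * (1 + G r) ^ 2) / (γ + (1 + G r) ^ 2))
      (2 * γ * G ρ * (1 + G ρ) * (γ * ρ / β - 1) / (γ + (1 + G ρ) ^ 2) ^ 2 * G') ρ := by
  have hu := (hG.const_add 1).fun_pow 2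
  have hnum := hG.fun_mul
    ((((hasDerivAt_id' ρ).const_mul γ).div_const β).fun_mul hu |>.const_add γ)
  refine (hnum.fun_div (hu.const_add γ) hγu).congr_deriv ?_
  field_simp
  linear_combination γ * (γ + (1 + G ρ) ^ 2) * hode

lemma sinr_sq_mul_eq {g β γ ρ : ℝ} (hg : g ≠ 0) (hβ : β ≠ 0) (hγ : γ ≠ 0)
    (hγu : γ + (1 + g) ^ 2 ≠ 0) (hβu : β + ρ * (1 + g) ^ 2 ≠ 0) :
    (g * (γ + γ * ρ / β * (1 + g) ^ 2) / (γ + (1 + g) ^ 2)) ^ 2 *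
        (2 * (1 / g + 1) / (1 + ρ / β * (1 + g) ^ 2) ^ 2) * (ρ / β - 1 / γ) =
      2 * γ * g * (1 + g) * (γ * ρ / β - 1) / (γ + (1 + g) ^ 2) ^ 2 := by
  have : 1 + ρ / β * (1 + g) ^ 2 = (β + ρ * (1 + g) ^ 2) / β := by field_simp
  rw [this]
  field_simp

/-- Fix β > 0 and γ > 0, and write g := g(β,ρ),
F(ρ) := f(γ,β,ρ). Then F is differentiable at every ρ > 0 with derivative
F'(ρ) = F(ρ)²·(2·(1/g+1)/(1+(ρ/β)(1+g)²)²)·(ρ/β − 1/γ)·g'(ρ), where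
g'(ρ) = −g·(1+g)²/(β+ρ·(1+g)²). -/
theorem ffun_hasDerivAt (β γ : ℝ) (hβ : 0 < β) (hγ : 0 < γ)
    (ρ : ℝ) (hρ : 0 < ρ) :
    HasDerivAt (fun r => ffun γ β r)
      ((ffun γ β ρ) ^ 2 *
        (2 * (1 / gfun β ρ + 1) / (1 + (ρ / β) * (1 + gfun β ρ) ^ 2) ^ 2) *
        (ρ / β - 1 / γ) *
        (-(gfun β ρ * (1 + gfun β ρ) ^ 2) / (β + ρ * (1 + gfun β ρ) ^ 2))) ρ := by
  have hg := gfun_pos β hρ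
  have hβu : β + ρ * (1 + gfun β ρ) ^ 2 ≠ 0 := by positivity
  rw [ffun, sinr_sq_mul_eq hg.ne' hβ.ne' hγ.ne' (by positivity) hβu]
  exact hasDerivAt_sinr_of_ode (gfun_hasDerivAt β hρ) (div_mul_cancel₀ _ hβu) hβ.ne'
    (by positivity)
end

section
/- Let L ≥ 1, β > 0, and let γ_1 ≥ γ_2 ≥ … ≥ γ_L > 0. Let β_j ≥ 0 and p_j ≥ 0 for j = 1,…,L, with β_j · p_j > 0 for at least one j. Define R(ρ) := Σ_{j=1}^L β_j · log(1 + p_j · f(γ_j,β,ρ)) for ρ > 0. Then R is strictly increasing on the interval (0, β/γ_1) and strictly decreasing on the interval (β/γ_L, ∞). -/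
lemma gfun_quadratic (β : ℝ) {ρ : ℝ} (hρ : 0 < ρ) :
    ρ * gfun β ρ * (1 + gfun β ρ) + β * gfun β ρ = 1 + gfun β ρ := by
  have hs : √((ρ + β - 1) ^ 2 + 4 * ρ) ^ 2 = (ρ + β - 1) ^ 2 + 4 * ρ :=
    Real.sq_sqrt (by positivity)
  rw [gfun]
  generalize √((ρ + β - 1) ^ 2 + 4 * ρ) = s at hs
  field_simp
  linear_combination hs

lemma gfun_strictAntiOn {β : ℝ} (hβ : 0 < β) : StrictAntiOn (gfun β) (Set.Ioi 0) := by
  intro ρ₁ (h₁ : 0 < ρ₁) ρ₂ (h₂ : 0 < ρ₂) h₁₂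
  have hg₁ := gfun_pos β h₁
  have hg₂ := gfun_pos β h₂
  have he₁ := gfun_quadratic β h₁
  have he₂ := gfun_quadratic β h₂
  by_contra! hle
  -- subtracting the two quadratics leaves a sum of two nonnegative terms, the first positive
  have key : (1 + gfun β ρ₁) * (1 + gfun β ρ₂) * (ρ₂ * gfun β ρ₂ - ρ₁ * gfun β ρ₁)
      + β * (gfun β ρ₂ - gfun β ρ₁) = 0 := by
    linear_combination (1 + gfun β ρ₁) * he₂ - (1 + gfun β ρ₂) * he₁
  have hρg : 0 < ρ₂ * gfun β ρ₂ - ρ₁ * gfun β ρ₁ := by nlinarith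
  nlinarith [mul_pos (mul_pos (by linarith : (0 : ℝ) < 1 + gfun β ρ₁)
    (by linarith : (0 : ℝ) < 1 + gfun β ρ₂)) hρg, mul_nonneg hβ.le (sub_nonneg.2 hle)]

lemma ffun_pos {γ β ρ : ℝ} (hγ : 0 < γ) (hβ : 0 < β) (hρ : 0 < ρ) : 0 < ffun γ β ρ := by
  have := gfun_pos β hρ
  unfold ffun
  positivity

/-- `ffun γ β ρ` as a function of `g = gfun β ρ`, simplified by `gfun_quadratic`. -/
noncomputable def ffunOfG (γ β g : ℝ) : ℝ :=
  γ * ((1 + g) ^ 2 - β * g ^ 2) / (β * (γ + (1 + g) ^ 2))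

lemma ffun_eq_ffunOfG {γ β ρ : ℝ} (hγ : 0 < γ) (hβ : 0 < β) (hρ : 0 < ρ) :
    ffun γ β ρ = ffunOfG γ β (gfun β ρ) := by
  have hg := gfun_pos β hρ
  have he := gfun_quadratic β hρ
  rw [ffun, ffunOfG]
  generalize gfun β ρ = g at *
  field_simp
  linear_combination (1 + g) * he

/-- The derivative of `ffunOfG γ β` at `g` is a positive multiple of `critPoly γ β g`. -/
def critPoly (γ β g : ℝ) : ℝ :=
  γ + γ * g - β * γ * g - β * g - β * g ^ 2

/-- The difference quotient of `ffunOfG γ β` between `g₁` and `g₂` is a positive multiple of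
`critSecant γ β g₁ g₂`; note `critSecant γ β g g = 2 * critPoly γ β g`. -/
def critSecant (γ β g₁ g₂ : ℝ) : ℝ :=
  γ * (2 + g₁ + g₂) - β * γ * (g₁ + g₂) - β * (g₁ + g₂ + 2 * g₁ * g₂)

lemma ffunOfG_sub_ffunOfG {γ β g₁ g₂ : ℝ} (hβ : β ≠ 0)
    (h₁ : γ + (1 + g₁) ^ 2 ≠ 0) (h₂ : γ + (1 + g₂) ^ 2 ≠ 0) :
    ffunOfG γ β g₁ - ffunOfG γ β g₂ =
      γ * (g₁ - g₂) * critSecant γ β g₁ g₂ /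
        (β * (γ + (1 + g₁) ^ 2) * (γ + (1 + g₂) ^ 2)) := by
  rw [ffunOfG, ffunOfG, critSecant]
  field_simp
  ring

lemma mul_critSecant (γ β g₀ g₁ g₂ : ℝ) :
    g₀ * critSecant γ β g₁ g₂ = (g₀ - g₁) * (γ + β * g₀ * g₂) + (g₀ - g₂) * (γ + β * g₀ * g₁)
      + (g₁ + g₂) * critPoly γ β g₀ := by
  rw [critSecant, critPoly]
  ring

lemma critPoly_gfun_div {γ β : ℝ} (hγ : 0 < γ) (hβ : 0 < β) :
    critPoly γ β (gfun β (β / γ)) = 0 := by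
  have he := gfun_quadratic β (div_pos hβ hγ)
  field_simp at he
  rw [critPoly]
  linear_combination -he

lemma ffunOfG_strictMonoOn_Icc {γ β g₀ : ℝ} (hγ : 0 < γ) (hβ : 0 < β) (hg₀ : 0 < g₀)
    (hcrit : critPoly γ β g₀ = 0) :
    StrictMonoOn (ffunOfG γ β) (Set.Icc 0 g₀) := by
  rintro g₁ ⟨h₁, h₁'⟩ g₂ ⟨h₂, h₂'⟩ h₁₂
  have hsec : 0 < critSecant γ β g₂ g₁ := by
    have := mul_critSecant γ β g₀ g₂ g₁
    rw [hcrit] at this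
    nlinarith [mul_pos (by linarith : 0 < g₀ - g₁) (by positivity : 0 < γ + β * g₀ * g₂),
      mul_nonneg (by linarith : 0 ≤ g₀ - g₂) (by positivity : 0 ≤ γ + β * g₀ * g₁)]
  rw [← sub_pos, ffunOfG_sub_ffunOfG hβ.ne' (by positivity) (by positivity)]
  have : 0 < g₂ - g₁ := sub_pos.2 h₁₂
  positivity

lemma ffunOfG_strictAntiOn_Ici {γ β g₀ : ℝ} (hγ : 0 < γ) (hβ : 0 < β) (hg₀ : 0 < g₀)
    (hcrit : critPoly γ β g₀ = 0) :
    StrictAntiOn (ffunOfG γ β) (Set.Ici g₀) := by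
  rintro g₁ (h₁ : g₀ ≤ g₁) g₂ (h₂ : g₀ ≤ g₂) h₁₂
  have hg₁ : 0 ≤ g₁ := hg₀.le.trans h₁
  have hg₂ : 0 ≤ g₂ := hg₀.le.trans h₂
  have hsec : critSecant γ β g₁ g₂ < 0 := by
    have := mul_critSecant γ β g₀ g₁ g₂
    rw [hcrit] at this
    nlinarith [mul_pos (by linarith : 0 < g₂ - g₀) (by positivity : 0 < γ + β * g₀ * g₁),
      mul_nonneg (by linarith : 0 ≤ g₁ - g₀) (by positivity : 0 ≤ γ + β * g₀ * g₂)]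
  rw [← sub_pos, ffunOfG_sub_ffunOfG hβ.ne' (by positivity) (by positivity)]
  exact div_pos (mul_pos_of_neg_of_neg (mul_neg_of_pos_of_neg hγ (sub_neg.2 h₁₂)) hsec)
    (by positivity)

lemma ffun_strictMonoOn {γ β : ℝ} (hγ : 0 < γ) (hβ : 0 < β) :
    StrictMonoOn (ffun γ β) (Set.Ioc 0 (β / γ)) := by
  have hmaps : Set.MapsTo (gfun β) (Set.Ioc 0 (β / γ)) (Set.Ici (gfun β (β / γ))) :=
    fun ρ hρ ↦ (gfun_strictAntiOn hβ).antitoneOn hρ.1 (div_pos hβ hγ) hρ.2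
  refine ((ffunOfG_strictAntiOn_Ici hγ hβ (gfun_pos β (div_pos hβ hγ))
    (critPoly_gfun_div hγ hβ)).comp
      ((gfun_strictAntiOn hβ).mono Set.Ioc_subset_Ioi_self) hmaps).congr ?_
  exact fun ρ hρ ↦ (ffun_eq_ffunOfG hγ hβ hρ.1).symm

lemma ffun_strictAntiOn {γ β : ℝ} (hγ : 0 < γ) (hβ : 0 < β) :
    StrictAntiOn (ffun γ β) (Set.Ici (β / γ)) := by
  have hρ₀ : 0 < β / γ := div_pos hβ hγ
  have hsub : Set.Ici (β / γ) ⊆ Set.Ioi 0 := fun ρ hρ ↦ hρ₀.trans_le hρ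
  have hmaps : Set.MapsTo (gfun β) (Set.Ici (β / γ)) (Set.Icc 0 (gfun β (β / γ))) :=
    fun ρ hρ ↦ ⟨(gfun_pos β (hsub hρ)).le,
      (gfun_strictAntiOn hβ).antitoneOn hρ₀ (hsub hρ) hρ⟩
  refine ((ffunOfG_strictMonoOn_Icc hγ hβ (gfun_pos β hρ₀)
    (critPoly_gfun_div hγ hβ)).comp_strictAntiOn
      ((gfun_strictAntiOn hβ).mono hsub) hmaps).congr ?_
  exact fun ρ hρ ↦ (ffun_eq_ffunOfG hγ hβ (hsub hρ)).symm

lemma sum_mul_log_one_add_mul_lt_sum {ι : Type*} [Fintype ι] {w p a b : ι → ℝ}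
    (hw : ∀ j, 0 ≤ w j) (hp : ∀ j, 0 ≤ p j) (ha : ∀ j, 0 ≤ a j) (hab : ∀ j, a j < b j)
    (hex : ∃ j, 0 < w j * p j) :
    ∑ j, w j * Real.log (1 + p j * a j) < ∑ j, w j * Real.log (1 + p j * b j) := by
  obtain ⟨j₀, hj₀⟩ := hex
  have hpa : ∀ j, 0 < 1 + p j * a j := fun j ↦ by nlinarith [mul_nonneg (hp j) (ha j)]
  refine Finset.sum_lt_sum (fun j _ ↦ ?_) ⟨j₀, Finset.mem_univ _, ?_⟩
  · refine mul_le_mul_of_nonneg_left (Real.log_le_log (hpa j) ?_) (hw j)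
    nlinarith [mul_le_mul_of_nonneg_left (hab j).le (hp j)]
  · have hw₀ := pos_of_mul_pos_left hj₀ (hp j₀)
    have hp₀ := pos_of_mul_pos_right hj₀ (hw j₀)
    refine mul_lt_mul_of_pos_left (Real.log_lt_log (hpa j₀) ?_) hw₀
    nlinarith [mul_lt_mul_of_pos_left (hab j₀) hp₀]

/-- Let L ≥ 1, β > 0, γ_1 ≥ … ≥ γ_L > 0, β_j ≥ 0, p_j ≥ 0 with
β_j·p_j > 0 for some j. Then R(ρ) := Σ_j β_j·log(1 + p_j·f(γ_j,β,ρ)) is strictly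
increasing on (0, β/γ_1) and strictly decreasing on (β/γ_L, ∞). -/
theorem sumRate_strictMono_strictAnti (L : ℕ) (hL : 1 ≤ L) (β : ℝ) (hβ : 0 < β)
    (γ : Fin L → ℝ) (hγpos : ∀ j, 0 < γ j)
    (hγsorted : ∀ i j : Fin L, i ≤ j → γ j ≤ γ i)
    (βv p : Fin L → ℝ) (hβv : ∀ j, 0 ≤ βv j) (hp : ∀ j, 0 ≤ p j)
    (hex : ∃ j, 0 < βv j * p j) :
    StrictMonoOn (fun ρ => ∑ j, βv j * Real.log (1 + p j * ffun (γ j) β ρ))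
      (Set.Ioo 0 (β / γ ⟨0, hL⟩)) ∧
    StrictAntiOn (fun ρ => ∑ j, βv j * Real.log (1 + p j * ffun (γ j) β ρ))
      (Set.Ioi (β / γ ⟨L - 1, by omega⟩)) := by
  have hdiv : ∀ i j, i ≤ j → β / γ i ≤ β / γ j := fun i j hij ↦
    div_le_div_of_nonneg_left hβ.le (hγpos j) (hγsorted i j hij)
  constructor
  · intro ρ₁ h₁ ρ₂ h₂ h₁₂
    have hIoc : ∀ j, Set.Ioo 0 (β / γ ⟨0, hL⟩) ⊆ Set.Ioc 0 (β / γ j) := fun j ↦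
      Set.Ioo_subset_Ioc_self.trans
        (Set.Ioc_subset_Ioc_right (hdiv _ j (Fin.le_def.2 (Nat.zero_le _))))
    exact sum_mul_log_one_add_mul_lt_sum hβv hp (fun j ↦ (ffun_pos (hγpos j) hβ h₁.1).le)
      (fun j ↦ ffun_strictMonoOn (hγpos j) hβ (hIoc j h₁) (hIoc j h₂) h₁₂) hex
  · intro ρ₁ h₁ ρ₂ h₂ h₁₂
    have hIci : ∀ j, Set.Ioi (β / γ ⟨L - 1, by omega⟩) ⊆ Set.Ici (β / γ j) := fun j ↦
      Set.Ioi_subset_Ici_self.trans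
        (Set.Ici_subset_Ici.2 (hdiv j _ (Fin.le_def.2 (Nat.le_sub_one_of_lt j.isLt))))
    have hρ₂ : 0 < ρ₂ := (div_pos hβ (hγpos _)).trans (h₁.trans h₁₂)
    exact sum_mul_log_one_add_mul_lt_sum hβv hp (fun j ↦ (ffun_pos (hγpos j) hβ hρ₂).le)
      (fun j ↦ ffun_strictAntiOn (hγpos j) hβ (hIci j h₁) (hIci j h₂) h₁₂) hex
end

section
/- Let 0 < f_j ≤ f_l, B > 0, P > 0, and let 0 < x ≤ x' ≤ B. Then for all y_l ≥ 0 and y_j ≥ 0 with y_l·x + y_j·(B − x) ≤ P, there exist y'_l ≥ 0 and y'_j ≥ 0 with y'_l·x' + y'_j·(B − x') ≤ P such that x·log(1 + y_l·f_l) + (B − x)·log(1 + y_j·f_j) ≤ x'·log(1 + y'_l·f_l) + (B − x')·log(1 + y'_j·f_j). In particular, the optimal value of the two-group power allocation problem is nondecreasing in the loading x assigned to the stronger group. -/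
/-!
Move the `x' - x` users that leave the weaker group to the stronger one, keeping their power
`y_j`, and then give all `x'` users of the stronger group the average power
`(x y_l + (x' - x) y_j) / x'`. This spends exactly the same power. Serving the moved users
through the stronger channel does not lower their rate, since `f_j ≤ f_l`, and averaging the
powers does not lower the total rate, since `y ↦ log (1 + y f_l)` is concave.
-/

open Real

theorem ConcaveOn.mul_add_mul_le_add_mul_map_div {s : Set ℝ} {g : ℝ → ℝ}
    (hg : ConcaveOn ℝ s g) {u v a b : ℝ} (hu : u ∈ s) (hv : v ∈ s)
    (ha : 0 ≤ a) (hb : 0 ≤ b) (hab : 0 < a + b) :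
    a * g u + b * g v ≤ (a + b) * g ((a * u + b * v) / (a + b)) := by
  have hjensen := hg.2 hu hv (div_nonneg ha hab.le) (div_nonneg hb hab.le)
    (by field_simp)
  have hmean : (a / (a + b)) • u + (b / (a + b)) • v = (a * u + b * v) / (a + b) := by
    simp only [smul_eq_mul]
    field_simp
  rw [hmean] at hjensen
  simp only [smul_eq_mul] at hjensen
  calc a * g u + b * g v = (a + b) * (a / (a + b) * g u + b / (a + b) * g v) := by
        field_simp
    _ ≤ (a + b) * g ((a * u + b * v) / (a + b)) := mul_le_mul_of_nonneg_left hjensen hab.le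

theorem twoGroup_rate_monotone_in_loading_general (fj fl B P x x' : ℝ)
    (hfj : 0 < fj) (hfl : fj ≤ fl)
    (hx : 0 < x) (hxx' : x ≤ x')
    (yl yj : ℝ) (hyl : 0 ≤ yl) (hyj : 0 ≤ yj)
    (hpow : yl * x + yj * (B - x) ≤ P) :
    ∃ yl' yj' : ℝ, 0 ≤ yl' ∧ 0 ≤ yj' ∧ yl' * x' + yj' * (B - x') ≤ P ∧
      x * Real.log (1 + yl * fl) + (B - x) * Real.log (1 + yj * fj) ≤
        x' * Real.log (1 + yl' * fl) + (B - x') * Real.log (1 + yj' * fj) := by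
  have hx' : 0 < x' := hx.trans_le hxx'
  have hmoved : 0 ≤ x' - x := sub_nonneg.2 hxx'
  set yl' := (x * yl + (x' - x) * yj) / x' with hyl'
  have hspent : yl' * x' = x * yl + (x' - x) * yj := div_mul_cancel₀ _ hx'.ne'
  refine ⟨yl', yj, div_nonneg (by positivity) hx'.le, hyj, by linarith, ?_⟩
  have hfl0 : 0 ≤ fl := hfj.le.trans hfl
  have hpool := strictConcaveOn_log_Ioi.concaveOn.mul_add_mul_le_add_mul_map_div
    (u := 1 + yl * fl) (v := 1 + yj * fl) (by simp only [Set.mem_Ioi]; positivity)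
    (by simp only [Set.mem_Ioi]; positivity) hx.le hmoved (by linarith)
  have hmean : (x * (1 + yl * fl) + (x' - x) * (1 + yj * fl)) / (x + (x' - x))
      = 1 + yl' * fl := by
    rw [hyl']
    field_simp
    ring
  rw [hmean, add_sub_cancel] at hpool
  have hstronger : log (1 + yj * fj) ≤ log (1 + yj * fl) :=
    log_le_log (by positivity) (by gcongr)
  linarith [mul_le_mul_of_nonneg_left hstronger hmoved]

/-- In the two-group fractional loading problem with
f_l ≥ f_j > 0, combined loading B and power budget P, the optimal combined
sum rate is nondecreasing in the loading x assigned to the stronger group: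
any feasible rate at loading x is dominated by a feasible rate at loading
x' ≥ x. -/
theorem twoGroup_rate_monotone_in_loading (fj fl B P x x' : ℝ)
    (hfj : 0 < fj) (hfl : fj ≤ fl) (hB : 0 < B) (hP : 0 < P)
    (hx : 0 < x) (hxx' : x ≤ x') (hx'B : x' ≤ B)
    (yl yj : ℝ) (hyl : 0 ≤ yl) (hyj : 0 ≤ yj)
    (hpow : yl * x + yj * (B - x) ≤ P) :
    ∃ yl' yj' : ℝ, 0 ≤ yl' ∧ 0 ≤ yj' ∧ yl' * x' + yj' * (B - x') ≤ P ∧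
      x * Real.log (1 + yl * fl) + (B - x) * Real.log (1 + yj * fj) ≤
        x' * Real.log (1 + yl' * fl) + (B - x') * Real.log (1 + yj' * fj) :=
  twoGroup_rate_monotone_in_loading_general fj fl B P x x' hfj hfl hx hxx' yl yj hyl hyj hpow
end
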